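/- For a > 0 and real a₁ ≥ 0, b₁, with A = a₁² + a: ∫₀^∞ z · erf(a₁z + b₁) · exp(−a z²) dz = erf(b₁)/(2a) + (a₁/(2a√A)) · exp(−a b₁²/A) · (1 − erf(a₁b₁/√A)). -/

import Mathlib

open Real MeasureTheory Filter Set

-- auxiliary lemmas

/-- The Gauss error function. -/
noncomputable def erf (x : ℝ) : ℝ := (2 / Real.sqrt π) * ∫ t in (0 : ℝ)..x, Real.exp (-t ^ 2)

lemma exp_neg_sq_cont : Continuous fun t : ℝ => Real.exp (-t ^ 2) := by continuity

lemma erf_hasDerivAt (x : ℝ) :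
    HasDerivAt erf (2 / Real.sqrt π * Real.exp (-x ^ 2)) x := by
  have h : HasDerivAt (fun u => ∫ t in (0:ℝ)..u, Real.exp (-t ^ 2)) (Real.exp (-x ^ 2)) x :=
    intervalIntegral.integral_hasDerivAt_right
      ((exp_neg_sq_cont.intervalIntegrable _ _))
      (exp_neg_sq_cont.stronglyMeasurableAtFilter _ _)
      exp_neg_sq_cont.continuousAt
  exact h.const_mul (2 / Real.sqrt π)

lemma erf_continuous : Continuous erf :=
  continuous_iff_continuousAt.2 fun x => (erf_hasDerivAt x).continuousAt

lemma abs_erf_le (x : ℝ) : |erf x| ≤ 2 / Real.sqrt π * |x| := by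
  have h : ‖∫ t in (0:ℝ)..x, Real.exp (-t ^ 2)‖ ≤ 1 * |x - 0| := by
    apply intervalIntegral.norm_integral_le_of_norm_le_const
    intro t _
    rw [Real.norm_eq_abs, abs_of_pos (Real.exp_pos _)]
    have : -t ^ 2 ≤ 0 := neg_nonpos.mpr (by positivity)
    exact Real.exp_le_one_iff.2 this
  have hπ : 0 ≤ 2 / Real.sqrt π := by positivity
  calc |erf x| = 2 / Real.sqrt π * ‖∫ t in (0:ℝ)..x, Real.exp (-t ^ 2)‖ := by
        rw [erf, abs_mul, abs_of_nonneg hπ, Real.norm_eq_abs]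
    _ ≤ 2 / Real.sqrt π * (1 * |x - 0|) := by gcongr
    _ = 2 / Real.sqrt π * |x| := by rw [one_mul, sub_zero]

lemma erf_tendsto_one : Tendsto erf atTop (nhds 1) := by
  have hint : IntegrableOn (fun t : ℝ => Real.exp (-t ^ 2)) (Ioi 0) := by
    have := (integrable_exp_neg_mul_sq (by norm_num : (0:ℝ) < 1)).integrableOn (s := Ioi 0)
    simpa using this
  have h := intervalIntegral_tendsto_integral_Ioi 0 hint tendsto_id
  have hval : ∫ t in Ioi (0:ℝ), Real.exp (-t ^ 2) = Real.sqrt π / 2 := by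
    have := integral_gaussian_Ioi 1
    simpa using this
  rw [hval] at h
  have h2 : Tendsto erf atTop (nhds (2 / Real.sqrt π * (Real.sqrt π / 2))) :=
    h.const_mul (2 / Real.sqrt π)
  have hπ : Real.sqrt π ≠ 0 := by positivity
  have heq : 2 / Real.sqrt π * (Real.sqrt π / 2) = 1 := by field_simp
  rwa [heq] at h2

set_option maxHeartbeats 1000000 in
/-- Korotkov's integral identity. -/
theorem korotkov_integral (a a₁ b₁ : ℝ) (ha : 0 < a) (ha₁ : 0 ≤ a₁)
    (A : ℝ) (hA : A = a₁ ^ 2 + a) :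
    ∫ z in Set.Ioi (0 : ℝ), z * erf (a₁ * z + b₁) * Real.exp (-a * z ^ 2) =
      erf b₁ / (2 * a) +
      (a₁ / (2 * a * Real.sqrt A)) * Real.exp (-a * b₁ ^ 2 / A) *
        (1 - erf (a₁ * b₁ / Real.sqrt A)) := by
  have hπ : (0:ℝ) < Real.sqrt π := Real.sqrt_pos.2 Real.pi_pos
  have hπ' : Real.sqrt π ≠ 0 := ne_of_gt hπ
  have ha' : a ≠ 0 := ne_of_gt ha
  have hA' : 0 < A := by rw [hA]; positivity
  have hsA : (0:ℝ) < Real.sqrt A := Real.sqrt_pos.2 hA'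
  have hsq : Real.sqrt A ^ 2 = A := Real.sq_sqrt hA'.le
  have hsA' : Real.sqrt A ≠ 0 := ne_of_gt (Real.sqrt_pos.2 hA')
  have hAne : A ≠ 0 := ne_of_gt hA'
  set q : ℝ → ℝ := fun z => Real.exp (-((a₁ * z + b₁) ^ 2 + a * z ^ 2)) with hq
  have hqcont : Continuous q := by rw [hq]; continuity
  have hqint : IntegrableOn q (Set.Ioi 0) := by
    apply Integrable.mono' ((integrable_exp_neg_mul_sq ha).integrableOn)
      hqcont.aestronglyMeasurable.restrict
    filter_upwards with z
    rw [Real.norm_eq_abs, abs_of_pos (Real.exp_pos _)]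
    apply Real.exp_le_exp.2
    nlinarith [sq_nonneg (a₁ * z + b₁)]
  -- integrability of the main integrand
  have htgtint : IntegrableOn
      (fun z => z * erf (a₁ * z + b₁) * Real.exp (-a * z ^ 2)) (Set.Ioi 0) := by
    have hg1 : IntegrableOn (fun z : ℝ => z ^ 2 * Real.exp (-a * z ^ 2)) (Set.Ioi 0) := by
      have h2 := integrableOn_rpow_mul_exp_neg_mul_sq ha (s := 2) (by norm_num)
      apply h2.congr_fun ?_ measurableSet_Ioi
      intro z hz
      simp only []
      rw [← Real.rpow_natCast z 2]
      norm_num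
    have hg2 : IntegrableOn (fun z : ℝ => z * Real.exp (-a * z ^ 2)) (Set.Ioi 0) :=
      (integrable_mul_exp_neg_mul_sq ha).integrableOn
    have hg : IntegrableOn (fun z : ℝ => 2 / Real.sqrt π *
        (a₁ * (z ^ 2 * Real.exp (-a * z ^ 2)) + |b₁| * (z * Real.exp (-a * z ^ 2))))
        (Set.Ioi 0) :=
      ((hg1.const_mul a₁).add (hg2.const_mul |b₁|)).const_mul _
    apply Integrable.mono' hg
    · refine (Continuous.aestronglyMeasurable ?_).restrict
      exact (continuous_id.mul (erf_continuous.comp (by continuity))).mul (by continuity)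
    · filter_upwards [ae_restrict_mem measurableSet_Ioi] with z hz
      have hz0 : (0:ℝ) < z := hz
      have h2 : |a₁ * z + b₁| ≤ a₁ * z + |b₁| := by
        calc |a₁ * z + b₁| ≤ |a₁ * z| + |b₁| := abs_add_le _ _
          _ = a₁ * z + |b₁| := by rw [abs_mul, abs_of_nonneg ha₁, abs_of_pos hz0]
      calc ‖z * erf (a₁ * z + b₁) * Real.exp (-a * z ^ 2)‖
          = z * |erf (a₁ * z + b₁)| * Real.exp (-a * z ^ 2) := by
            rw [Real.norm_eq_abs, abs_mul, abs_mul, abs_of_pos hz0,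
              abs_of_pos (Real.exp_pos _)]
        _ ≤ z * (2 / Real.sqrt π * (a₁ * z + |b₁|)) * Real.exp (-a * z ^ 2) := by
            gcongr
            exact (abs_erf_le _).trans (by gcongr)
        _ = 2 / Real.sqrt π *
            (a₁ * (z ^ 2 * Real.exp (-a * z ^ 2)) + |b₁| * (z * Real.exp (-a * z ^ 2))) := by
            ring
  -- FTC on (0,∞) for f
  set f : ℝ → ℝ := fun z => erf (a₁ * z + b₁) * (-Real.exp (-a * z ^ 2) / (2 * a)) with hf
  set f' : ℝ → ℝ := fun z => 2 / Real.sqrt π * Real.exp (-(a₁ * z + b₁) ^ 2) * a₁ *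
      (-Real.exp (-a * z ^ 2) / (2 * a)) + erf (a₁ * z + b₁) * (z * Real.exp (-a * z ^ 2))
      with hf'
  have hderiv : ∀ z : ℝ, HasDerivAt f (f' z) z := by
    intro z
    have hi : HasDerivAt (fun z : ℝ => a₁ * z + b₁) a₁ z := by
      simpa using ((hasDerivAt_id z).const_mul a₁).add_const b₁
    have hu : HasDerivAt (fun z => erf (a₁ * z + b₁))
        (2 / Real.sqrt π * Real.exp (-(a₁ * z + b₁) ^ 2) * a₁) z :=
      (erf_hasDerivAt _).comp z hi
    have hv : HasDerivAt (fun z : ℝ => -Real.exp (-a * z ^ 2) / (2 * a))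
        (z * Real.exp (-a * z ^ 2)) z := by
      have h0 : HasDerivAt (fun z : ℝ => -a * z ^ 2) (-a * (2 * z)) z := by
        simpa using (hasDerivAt_pow 2 z).const_mul (-a)
      have h2 := ((h0.exp).div_const (2 * a)).neg
      convert h2 using 1
      · rfl
      · rfl
      · funext x; rw [neg_div]; rfl
      rw [show -(Real.exp (-a * z ^ 2) * (-a * (2 * z)) / (2 * a)) =
        2 * a * (z * Real.exp (-a * z ^ 2)) / (2 * a) from by ring,
        mul_div_cancel_left₀ _ (by positivity : (2:ℝ) * a ≠ 0)]
    exact hu.mul hv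
  have hf'eq : f' = fun z => (2 / Real.sqrt π * a₁ * (-1 / (2 * a))) * q z +
      z * erf (a₁ * z + b₁) * Real.exp (-a * z ^ 2) := by
    funext z
    rw [hf', hq]
    simp only
    rw [show -((a₁ * z + b₁) ^ 2 + a * z ^ 2) = -(a₁ * z + b₁) ^ 2 + -(a * z ^ 2) by ring,
      Real.exp_add]
    ring
  have f'int : IntegrableOn f' (Set.Ioi 0) := by
    rw [hf'eq]
    exact (hqint.const_mul _).add htgtint
  have hlim : Tendsto f atTop (nhds 0) := by
    have hexp : Tendsto (fun z : ℝ => -Real.exp (-a * z ^ 2) / (2 * a)) atTop (nhds 0) := by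
      have h1 : Tendsto (fun z : ℝ => -a * z ^ 2) atTop atBot := by
        have := (tendsto_pow_atTop (n := 2) (by norm_num)).const_mul_atTop ha
        have h2 := tendsto_neg_atBot_iff.2 this
        apply h2.congr
        intro z; ring
      have h3 := Real.tendsto_exp_atBot.comp h1
      have h4 := (h3.neg).div_const (2 * a)
      simpa using h4
    obtain ⟨L, hL⟩ : ∃ L, Tendsto (fun z => erf (a₁ * z + b₁)) atTop (nhds L) := by
      rcases eq_or_lt_of_le ha₁ with h0 | h0
      · exact ⟨erf b₁, by
          simpa [← h0] using (tendsto_const_nhds : Tendsto (fun _ : ℝ => erf b₁) atTop _)⟩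
      · refine ⟨1, erf_tendsto_one.comp ?_⟩
        exact tendsto_atTop_add_const_right _ b₁ (tendsto_id.const_mul_atTop h0)
    have h5 := hL.mul hexp
    rw [mul_zero] at h5
    exact h5
  have key : ∫ z in Set.Ioi (0:ℝ), f' z = 0 - f 0 :=
    integral_Ioi_of_hasDerivAt_of_tendsto
      ((hderiv 0).continuousAt.continuousWithinAt) (fun z _ => hderiv z) f'int hlim
  -- FTC for the Gaussian cross term
  set g : ℝ → ℝ := fun z => Real.exp (-a * b₁ ^ 2 / A) * (Real.sqrt π / (2 * Real.sqrt A)) *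
      erf (Real.sqrt A * z + a₁ * b₁ / Real.sqrt A) with hg
  have hgderiv : ∀ z : ℝ, HasDerivAt g (q z) z := by
    intro z
    have hi : HasDerivAt (fun z : ℝ => Real.sqrt A * z + a₁ * b₁ / Real.sqrt A)
        (Real.sqrt A) z := by
      simpa using ((hasDerivAt_id z).const_mul (Real.sqrt A)).add_const (a₁ * b₁ / Real.sqrt A)
    have h := ((erf_hasDerivAt _).comp z hi).const_mul
      (Real.exp (-a * b₁ ^ 2 / A) * (Real.sqrt π / (2 * Real.sqrt A)))
    convert h using 1
    · rfl
    · rfl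
    · rfl
    rw [hq]
    simp only
    have h1 : -((a₁ * z + b₁) ^ 2 + a * z ^ 2) =
        (-a * b₁ ^ 2 / A) + (-(Real.sqrt A * z + a₁ * b₁ / Real.sqrt A) ^ 2) := by
      have e1 : (Real.sqrt A * z + a₁ * b₁ / Real.sqrt A) ^ 2 =
          A * z ^ 2 + 2 * (a₁ * b₁) * z + (a₁ * b₁) ^ 2 / A := by
        rw [← hsq]
        field_simp
        rw [Real.sqrt_sq (Real.sqrt_nonneg A)]
        ring
      rw [e1, hA]
      have hAne2 : a₁ ^ 2 + a ≠ 0 := by positivity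
      field_simp
      ring
    rw [h1, Real.exp_add]
    field_simp
  have hGlim : Tendsto g atTop
      (nhds (Real.exp (-a * b₁ ^ 2 / A) * (Real.sqrt π / (2 * Real.sqrt A)))) := by
    have hin : Tendsto (fun z : ℝ => Real.sqrt A * z + a₁ * b₁ / Real.sqrt A) atTop atTop :=
      tendsto_atTop_add_const_right _ _ (tendsto_id.const_mul_atTop hsA)
    have h6 := (erf_tendsto_one.comp hin).const_mul
      (Real.exp (-a * b₁ ^ 2 / A) * (Real.sqrt π / (2 * Real.sqrt A)))
    rw [mul_one] at h6
    exact h6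
  have hG : ∫ z in Set.Ioi (0:ℝ), q z =
      Real.exp (-a * b₁ ^ 2 / A) * (Real.sqrt π / (2 * Real.sqrt A)) - g 0 :=
    integral_Ioi_of_hasDerivAt_of_tendsto
      ((hgderiv 0).continuousAt.continuousWithinAt) (fun z _ => hgderiv z) hqint hGlim
  -- assemble
  have hsplit : ∫ z in Set.Ioi (0:ℝ), f' z =
      (2 / Real.sqrt π * a₁ * (-1 / (2 * a))) * (∫ z in Set.Ioi (0:ℝ), q z) +
      ∫ z in Set.Ioi (0:ℝ), z * erf (a₁ * z + b₁) * Real.exp (-a * z ^ 2) := by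
    rw [hf'eq]
    rw [integral_add (hqint.const_mul _) htgtint, integral_const_mul]
  rw [key] at hsplit
  have hf0 : f 0 = erf b₁ * (-1 / (2 * a)) := by
    rw [hf]; norm_num
  have hg0 : g 0 = Real.exp (-a * b₁ ^ 2 / A) * (Real.sqrt π / (2 * Real.sqrt A)) *
      erf (a₁ * b₁ / Real.sqrt A) := by
    rw [hg]; norm_num
  have htgt : ∫ z in Set.Ioi (0:ℝ), z * erf (a₁ * z + b₁) * Real.exp (-a * z ^ 2) =
      (0 - f 0) - (2 / Real.sqrt π * a₁ * (-1 / (2 * a))) * (∫ z in Set.Ioi (0:ℝ), q z) := by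
    linarith [hsplit]
  rw [htgt, hG, hf0, hg0]
  field_simp
  ring
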